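/- arXiv:math/0412545 — 6 statements merged into one kernel-verified Lean document; each statement's English description precedes it below -/
import Mathlib

section
/- Let p be a polynomial of degree d ≥ 1 in r non-commuting variables with coefficients in the m×m' complex matrices (i.e., an element of M_{m,m'}(ℂ) ⊗ ℂ⟨X_1,…,X_r⟩). Then there exist positive integers m_1,…,m_{d+1} with m_1 = m and m_{d+1} = m', and polynomials u_j ∈ M_{m_j,m_{j+1}}(ℂ) ⊗ ℂ⟨X_1,…,X_r⟩ for j = 1,…,d, each of degree at most 1, such that p = u_1 u_2 ⋯ u_d. -/
/-- The subspace of polynomials of degree at most one in the free algebra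
`ℂ⟨X₁,…,X_r⟩`: the span of `1` together with the generators. -/
noncomputable def degOne (r : ℕ) : Submodule ℂ (FreeAlgebra ℂ (Fin r)) :=
  Submodule.span ℂ ({1} ∪ Set.range (FreeAlgebra.ι ℂ))

/-- The product `u₀ u₁ ⋯ u_{len-1}` of a chain of rectangular matrices
`u j : M_{ms j, ms (j+1)}`, starting at index `s`. -/
noncomputable def chainProd {A : Type*} [Semiring A] (ms : ℕ → ℕ)
    (u : ∀ j : ℕ, Matrix (Fin (ms j)) (Fin (ms (j + 1))) A) :
    (s len : ℕ) → Matrix (Fin (ms s)) (Fin (ms (s + len))) A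
  | _, 0 => Matrix.of fun i j => if (i : ℕ) = (j : ℕ) then 1 else 0
  | s, (len + 1) => chainProd ms u s len * u (s + len)

section aux

variable {A : Type*} [Semiring A]

lemma chainProd_succ (ms : ℕ → ℕ)
    (u : ∀ j : ℕ, Matrix (Fin (ms j)) (Fin (ms (j + 1))) A) (s len : ℕ) :
    chainProd ms u s (len + 1) = chainProd ms u s len * u (s + len) := rfl

lemma chainProd_zero (ms : ℕ → ℕ)
    (u : ∀ j : ℕ, Matrix (Fin (ms j)) (Fin (ms (j + 1))) A) (s : ℕ) :
    chainProd ms u s 0 = (1 : Matrix (Fin (ms s)) (Fin (ms s)) A) := by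
  ext i j
  simp [chainProd, Matrix.one_apply, Fin.ext_iff]

lemma chainProd_congr (ms : ℕ → ℕ)
    (u u' : ∀ j : ℕ, Matrix (Fin (ms j)) (Fin (ms (j + 1))) A) (s len : ℕ)
    (h : ∀ j, s ≤ j → j < s + len → u j = u' j) :
    chainProd ms u s len = chainProd ms u' s len := by
  induction len with
  | zero => rfl
  | succ n ih =>
    rw [chainProd_succ, chainProd_succ, ih (fun j h1 h2 => h j h1 (by omega)),
      h (s + n) (by omega) (by omega)]

set_option linter.unusedSectionVars false in
lemma matrix_heq_apply {a b a' b' : ℕ} (ha : a = a') (hb : b = b')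
    {M : Matrix (Fin a) (Fin b) A} {M' : Matrix (Fin a') (Fin b') A}
    (h : HEq M M') (i : Fin a) (j : Fin b) :
    M i j = M' (Fin.cast ha i) (Fin.cast hb j) := by
  subst ha; subst hb; cases h; rfl

lemma mem_mul_fin {B : Type*} [Semiring B] [Algebra ℂ B] (M N : Submodule ℂ B) (x : B)
    (hx : x ∈ M * N) :
    ∃ n : ℕ, 0 < n ∧ ∃ a b : Fin n → B, (∀ k, a k ∈ M) ∧ (∀ k, b k ∈ N) ∧
      x = ∑ k, a k * b k := by
  refine Submodule.mul_induction_on hx ?_ ?_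
  · intro y hy z hz
    exact ⟨1, one_pos, fun _ => y, fun _ => z, fun _ => hy, fun _ => hz, by simp⟩
  · rintro x y ⟨n1, hn1, a1, b1, ha1, hb1, rfl⟩ ⟨n2, hn2, a2, b2, ha2, hb2, rfl⟩
    refine ⟨n1 + n2, by omega, Fin.addCases a1 a2, Fin.addCases b1 b2, ?_, ?_, ?_⟩
    · intro k
      refine Fin.addCases (fun k => ?_) (fun k => ?_) k <;> simp [ha1 _, ha2 _]
    · intro k
      refine Fin.addCases (fun k => ?_) (fun k => ?_) k <;> simp [hb1 _, hb2 _]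
    · rw [Fin.sum_univ_add]
      simp

lemma matrix_mul_decomp {B : Type*} [Semiring B] [Algebra ℂ B] (M N : Submodule ℂ B)
    {m m' : ℕ} (hm : 0 < m) (hm' : 0 < m') (p : Matrix (Fin m) (Fin m') B)
    (n : Fin m → Fin m' → ℕ) (hn : ∀ i j, 0 < n i j)
    (a b : (i : Fin m) → (j : Fin m') → Fin (n i j) → B)
    (ha : ∀ i j k, a i j k ∈ M) (hb : ∀ i j k, b i j k ∈ N)
    (hsum : ∀ i j, p i j = ∑ k, a i j k * b i j k) :
    ∃ c : ℕ, 0 < c ∧ ∃ (Q : Matrix (Fin m) (Fin c) B) (U : Matrix (Fin c) (Fin m') B),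
      (∀ i k, Q i k ∈ M) ∧ (∀ k j, U k j ∈ N) ∧ p = Q * U := by
  set ι := (i : Fin m) × (j : Fin m') × Fin (n i j) with hι
  have : Nonempty ι := ⟨⟨⟨0, hm⟩, ⟨0, hm'⟩, ⟨0, hn _ _⟩⟩⟩
  set e : ι ≃ Fin (Fintype.card ι) := Fintype.equivFin ι with he
  set Q : Matrix (Fin m) (Fin (Fintype.card ι)) B := Matrix.of (fun i k =>
    if (e.symm k).1 = i then a (e.symm k).1 (e.symm k).2.1 (e.symm k).2.2 else 0) with hQdef
  set U : Matrix (Fin (Fintype.card ι)) (Fin m') B := Matrix.of (fun k j =>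
    if (e.symm k).2.1 = j then b (e.symm k).1 (e.symm k).2.1 (e.symm k).2.2 else 0) with hUdef
  refine ⟨Fintype.card ι, Fintype.card_pos, Q, U, ?_, ?_, ?_⟩
  · intro i k
    rw [hQdef]
    simp only [Matrix.of_apply]
    split
    · exact ha _ _ _
    · exact zero_mem M
  · intro k j
    rw [hUdef]
    simp only [Matrix.of_apply]
    split
    · exact hb _ _ _
    · exact zero_mem N
  · ext i j
    have h1 : (Q * U) i j = ∑ t : ι,
        (if t.1 = i then a t.1 t.2.1 t.2.2 else 0) *
        (if t.2.1 = j then b t.1 t.2.1 t.2.2 else 0) :=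
      (Matrix.mul_apply).trans (Equiv.sum_comp e.symm fun t =>
        (if t.1 = i then a t.1 t.2.1 t.2.2 else 0) *
        (if t.2.1 = j then b t.1 t.2.1 t.2.2 else 0))
    rw [h1, hsum i j]
    rw [← Finset.univ_sigma_univ, Finset.sum_sigma]
    simp only [← Finset.univ_sigma_univ, Finset.sum_sigma]
    simp only [ite_mul, mul_ite, zero_mul, mul_zero, ite_self,
      Finset.sum_ite_irrel, Finset.sum_const_zero, Finset.sum_ite_eq',
      Finset.mem_univ, if_true]

end aux

lemma key_factorization (r : ℕ) (d : ℕ) (hd : 1 ≤ d) :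
    ∀ m m' : ℕ, 0 < m → 0 < m' →
    ∀ p : Matrix (Fin m) (Fin m') (FreeAlgebra ℂ (Fin r)),
    (∀ i j, p i j ∈ (degOne r) ^ d) →
    ∀ tail : ℕ → ℕ, (∀ j, 0 < tail j) →
    ∃ ms : ℕ → ℕ, (∀ j, 0 < ms j) ∧ ms 0 = m ∧ ms d = m' ∧ (∀ j, d < j → ms j = tail j) ∧
      ∃ u : ∀ j : ℕ, Matrix (Fin (ms j)) (Fin (ms (j + 1))) (FreeAlgebra ℂ (Fin r)),
        (∀ j, j < d → ∀ a b, u j a b ∈ degOne r) ∧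
        ∀ (h0 : m = ms 0) (hd' : m' = ms (0 + d)) (i : Fin m) (j : Fin m'),
          chainProd ms u 0 d (Fin.cast h0 i) (Fin.cast hd' j) = p i j := by
  induction d, hd using Nat.le_induction with
  | base =>
    intro m m' hm hm' p hp tail htail
    refine ⟨fun j => match j with | 0 => m | 1 => m' | (k+2) => tail (k+2),
      ?_, rfl, rfl, ?_, fun j => match j with | 0 => p | (k+1) => 0, ?_, ?_⟩
    · intro j
      match j with
      | 0 => exact hm
      | 1 => exact hm'
      | (k+2) => exact htail _
    · intro j hj
      match j, hj with
      | (k+2), _ => rfl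
    · intro j hj a b
      interval_cases j
      simpa using hp a b
    · intro h0 hd' i j
      rw [chainProd_succ, chainProd_zero, Matrix.one_mul]
      rfl
  | succ d hd ih =>
    intro m m' hm hm' p hp tail htail
    have hp' : ∀ i j, p i j ∈ (degOne r) ^ d * degOne r := by
      intro i j; rw [← pow_succ]; exact hp i j
    choose n hn a b ha hb hsum using fun i j => mem_mul_fin _ _ (p i j) (hp' i j)
    obtain ⟨N, hN, Q, U, hQ, hU, hpQU⟩ :=
      matrix_mul_decomp _ _ hm hm' p n hn a b ha hb hsum
    obtain ⟨ms, hpos, hms0, hmsd, hmstail, u, hu, hchain⟩ :=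
      ih m N hm hN Q hQ (fun j => if j = d + 1 then m' else tail j)
        (fun j => by by_cases h : j = d + 1 <;> simp [h, hm', htail j])
    have hmsd1 : ms (d + 1) = m' := by
      rw [hmstail (d + 1) (by omega)]; simp
    set U' : Matrix (Fin (ms d)) (Fin (ms (d + 1))) (FreeAlgebra ℂ (Fin r)) :=
      U.submatrix (Fin.cast hmsd) (Fin.cast hmsd1) with hU'def
    set u2 := Function.update u d U' with hu2def
    refine ⟨ms, hpos, hms0, hmsd1, ?_, u2, ?_, ?_⟩
    · intro j hj
      rw [hmstail j (by omega), if_neg (by omega)]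
    · intro j hj x y
      rcases eq_or_ne j d with rfl | hne
      · rw [hu2def, Function.update_self]
        exact hU _ _
      · rw [hu2def, Function.update_of_ne hne]
        exact hu j (by omega) x y
    · intro h0 hd' i j
      have e1 : (0 : ℕ) + d = d := Nat.zero_add d
      have hNd : N = ms (0 + d) := by rw [e1]; exact hmsd.symm
      have hca : ms (0 + d) = ms d := by rw [e1]
      have hcb : ms (0 + d + 1) = ms (d + 1) := by rw [e1]
      rw [chainProd_succ, Matrix.mul_apply,
        chainProd_congr ms u2 u 0 d
          (fun j' h1 h2 => by rw [hu2def]; exact Function.update_of_ne (by omega) _ _)]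
      have hu2heq : HEq (u2 (0 + d)) U' := by
        rw [e1, hu2def, Function.update_self]
      have hterm : ∀ k : Fin (ms (0 + d)),
          u2 (0 + d) k (Fin.cast hd' j) = U (Fin.cast hNd.symm k) j := by
        intro k
        exact (matrix_heq_apply hca hcb hu2heq k (Fin.cast hd' j)).trans rfl
      have hcterm : ∀ k : Fin (ms (0 + d)),
          chainProd ms u 0 d (Fin.cast h0 i) k = Q i (Fin.cast hNd.symm k) := by
        intro k
        exact hchain h0 hNd i (Fin.cast hNd.symm k)
      calc ∑ k, chainProd ms u 0 d (Fin.cast h0 i) k * u2 (0 + d) k (Fin.cast hd' j)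
          = ∑ k : Fin (ms (0 + d)),
              Q i (Fin.cast hNd.symm k) * U (Fin.cast hNd.symm k) j := by
            refine Finset.sum_congr rfl fun k _ => ?_
            rw [hterm k, hcterm k]
        _ = ∑ k : Fin N, Q i k * U k j :=
            Fintype.sum_equiv (finCongr hNd.symm) _ _ (fun k => rfl)
        _ = p i j := by rw [hpQU, Matrix.mul_apply]

/-- Every polynomial `p` of degree `d ≥ 1` in `r` non-commuting variables
with coefficients in `M_{m,m'}(ℂ)` factors as a product `p = u₁ u₂ ⋯ u_d` of polynomials
of degree at most one with matrix coefficients of suitable sizes `m = m₁, m₂, …, m_{d+1} = m'`. -/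
theorem polynomial_factorization_degree_one (r m m' d : ℕ) (hm : 0 < m) (hm' : 0 < m')
    (hd : 1 ≤ d) (p : Matrix (Fin m) (Fin m') (FreeAlgebra ℂ (Fin r)))
    (hp : ∀ i j, p i j ∈ (degOne r) ^ d) :
    ∃ ms : ℕ → ℕ, (∀ j, 0 < ms j) ∧ ms 0 = m ∧ ms d = m' ∧
      ∃ u : ∀ j : ℕ, Matrix (Fin (ms j)) (Fin (ms (j + 1))) (FreeAlgebra ℂ (Fin r)),
        (∀ j, j < d → ∀ a b, u j a b ∈ degOne r) ∧
        ∀ (h0 : m = ms 0) (hd' : m' = ms (0 + d)) (i : Fin m) (j : Fin m'),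
          chainProd ms u 0 d (Fin.cast h0 i) (Fin.cast hd' j) = p i j := by
  obtain ⟨ms, h1, h2, h3, _, u, h5, h6⟩ :=
    key_factorization r d hd m m' hm hm' p hp (fun _ => 1) (fun _ => one_pos)
  exact ⟨ms, h1, h2, h3, u, h5, h6⟩
end

section
/- Let 𝒜 and ℬ be unital C*-algebras and x_1,…,x_r ∈ 𝒜, y_1,…,y_r ∈ ℬ self-adjoint. Suppose that for all m ∈ ℕ and all self-adjoint a_0, a_1,…,a_r ∈ M_m(ℂ), the spectrum of a_0 ⊗ 1_𝒜 + Σ_i a_i ⊗ x_i contains the spectrum of a_0 ⊗ 1_ℬ + Σ_i a_i ⊗ y_i. Then for every polynomial p ∈ ℂ⟨X_1,…,X_r⟩, the spectrum of p(x_1,…,x_r) contains the spectrum of p(y_1,…,y_r). -/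
/-!
Every element `q` of the free algebra has a linear representation `q = u L⁻¹ v` in the sense of
Cohn: `u`, `v` are scalar row and column vectors and `L = c₀ + ∑ cᵢ Xᵢ` is an affine matrix that
is invertible over the free algebra. By the Schur complement formula, `q(z)` is then invertible
exactly when the affine pencil `[[0, u], [v, L]](z)` is, for every evaluation `z`. Replacing a
pencil `P` by its hermitian dilation `[[0, P], [P*, 0]]` makes the coefficients self-adjoint
without changing invertibility, so the hypothesis at the spectral point `0` shows that
invertibility of any pencil at `x` forces invertibility at `y`. Applied to `q = μ - p`, this
gives `σ(p(y)) ⊆ σ(p(x))`.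
-/

namespace Matrix

section Ring

variable {m n R : Type*} [Ring R]

theorem isUnit_iff_isUnit_apply_of_unique [Unique n] [DecidableEq n] {M : Matrix n n R} :
    IsUnit M ↔ IsUnit (M default default) :=
  (MulEquiv.isUnit_map (uniqueRingEquiv (m := n) (A := R))).symm

variable [Fintype m] [Fintype n] [DecidableEq m] [DecidableEq n]

@[simps]
def fromBlocksZero₂₁Units (A : (Matrix m m R)ˣ) (B : Matrix m n R) (D : (Matrix n n R)ˣ) :
    (Matrix (m ⊕ n) (m ⊕ n) R)ˣ where
  val := fromBlocks A B 0 D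
  inv := fromBlocks (↑A⁻¹ : Matrix m m R) (-((↑A⁻¹ : Matrix m m R) * B * (↑D⁻¹ : Matrix n n R)))
    0 (↑D⁻¹ : Matrix n n R)
  val_inv := by simp [fromBlocks_multiply, ← Matrix.mul_assoc]
  inv_val := by simp [fromBlocks_multiply, Matrix.mul_assoc]

@[simps]
def fromBlocksZero₁₂Units (A : (Matrix m m R)ˣ) (C : Matrix n m R) (D : (Matrix n n R)ˣ) :
    (Matrix (m ⊕ n) (m ⊕ n) R)ˣ where
  val := fromBlocks A 0 C D
  inv := fromBlocks (↑A⁻¹ : Matrix m m R) 0 (-((↑D⁻¹ : Matrix n n R) * C * (↑A⁻¹ : Matrix m m R)))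
    (↑D⁻¹ : Matrix n n R)
  val_inv := by simp [fromBlocks_multiply, ← Matrix.mul_assoc]
  inv_val := by simp [fromBlocks_multiply, Matrix.mul_assoc]

theorem isUnit_fromBlocks_zero_zero_iff {A : Matrix m m R} {D : Matrix n n R} :
    IsUnit (fromBlocks A 0 0 D) ↔ IsUnit A ∧ IsUnit D := by
  refine ⟨fun h => ?_, fun ⟨hA, hD⟩ => (fromBlocksZero₂₁Units hA.unit 0 hD.unit).isUnit⟩
  obtain ⟨W, hMW, hWM⟩ := isUnit_iff_exists.mp h
  rw [← fromBlocks_toBlocks W, fromBlocks_multiply, ← fromBlocks_one] at hMW hWM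
  simp only [Matrix.zero_mul, Matrix.mul_zero, add_zero, zero_add, fromBlocks_inj] at hMW hWM
  exact ⟨⟨⟨A, _, hMW.1, hWM.1⟩, rfl⟩, ⟨⟨D, _, hMW.2.2.2, hWM.2.2.2⟩, rfl⟩⟩

theorem isUnit_fromBlocks_zero₁₁_zero₂₂_iff {B C : Matrix m m R} :
    IsUnit (fromBlocks 0 B C 0) ↔ IsUnit B ∧ IsUnit C := by
  have hswap : fromBlocks 0 1 1 0 * fromBlocks 0 1 1 0 = (1 : Matrix (m ⊕ m) (m ⊕ m) R) := by
    simp [fromBlocks_multiply]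
  have hfac : fromBlocks 0 B C 0 = fromBlocks B 0 0 C * fromBlocks 0 1 1 0 := by
    simp [fromBlocks_multiply]
  rw [hfac, (Units.mk _ _ hswap hswap).isUnit_mul_units, isUnit_fromBlocks_zero_zero_iff]

theorem isUnit_fromBlocks_iff_of_units₂₂ (A : Matrix m m R) (B : Matrix m n R) (C : Matrix n m R)
    (D : (Matrix n n R)ˣ) :
    IsUnit (fromBlocks A B C D) ↔ IsUnit (A - B * (↑D⁻¹ : Matrix n n R) * C) := by
  have hDC : (D : Matrix n n R) * ((↑D⁻¹ : Matrix n n R) * C) = C := by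
    rw [← Matrix.mul_assoc, Units.mul_inv, Matrix.one_mul]
  have hfac : fromBlocks A B C D =
      (fromBlocksZero₂₁Units 1 (B * (↑D⁻¹ : Matrix n n R)) 1 : Matrix (m ⊕ n) (m ⊕ n) R) *
      fromBlocks (A - B * (↑D⁻¹ : Matrix n n R) * C) 0 0 ↑D *
      (fromBlocksZero₁₂Units 1 ((↑D⁻¹ : Matrix n n R) * C) 1 : Matrix (m ⊕ n) (m ⊕ n) R) := by
    simp [fromBlocks_multiply, Matrix.mul_assoc, hDC]
  rw [hfac, Units.isUnit_mul_units, Units.isUnit_units_mul, isUnit_fromBlocks_zero_zero_iff]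
  simp

end Ring

section HermitianDilation

variable {α n : Type*}

def hermitianDilation [Zero α] [Star α] (M : Matrix n n α) : Matrix (n ⊕ n) (n ⊕ n) α :=
  fromBlocks 0 M Mᴴ 0

theorem isHermitian_hermitianDilation [AddMonoid α] [StarAddMonoid α] (M : Matrix n n α) :
    (hermitianDilation M).IsHermitian :=
  isHermitian_zero.fromBlocks rfl isHermitian_zero

theorem isUnit_hermitianDilation_iff [Ring α] [StarRing α] [Fintype n] [DecidableEq n]
    {M : Matrix n n α} : IsUnit (hermitianDilation M) ↔ IsUnit M := by
  rw [hermitianDilation, isUnit_fromBlocks_zero₁₁_zero₂₂_iff, ← star_eq_conjTranspose, isUnit_star,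
    and_self]

end HermitianDilation

section Pencil

variable {R S T X l m n o : Type*} [CommSemiring R] [Semiring S] [Algebra R S] [Fintype X]

def pencil (a₀ : Matrix m n R) (a : X → Matrix m n R) (z : X → S) : Matrix m n S :=
  a₀.map (algebraMap R S) + ∑ i, (a i).map fun c => c • z i

theorem pencil_apply (a₀ : Matrix m n R) (a : X → Matrix m n R) (z : X → S) (i : m) (j : n) :
    pencil a₀ a z i j = algebraMap R S (a₀ i j) + ∑ k, a k i j • z k := by
  simp [pencil, sum_apply]

@[simp]
theorem pencil_zero_right (a₀ : Matrix m n R) (z : X → S) :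
    pencil a₀ (fun _ => 0) z = a₀.map (algebraMap R S) := by
  ext; simp [pencil_apply]

theorem pencil_fromBlocks (A₀ : Matrix l n R) (B₀ : Matrix l o R) (C₀ : Matrix m n R)
    (D₀ : Matrix m o R) (A : X → Matrix l n R) (B : X → Matrix l o R) (C : X → Matrix m n R)
    (D : X → Matrix m o R) (z : X → S) :
    pencil (fromBlocks A₀ B₀ C₀ D₀) (fun i => fromBlocks (A i) (B i) (C i) (D i)) z =
      fromBlocks (pencil A₀ A z) (pencil B₀ B z) (pencil C₀ C z) (pencil D₀ D z) := by
  ext (i | i) (j | j) <;> simp [pencil_apply]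

theorem submatrix_pencil (a₀ : Matrix m n R) (a : X → Matrix m n R) (z : X → S) (f : l → m)
    (g : o → n) :
    (pencil a₀ a z).submatrix f g = pencil (a₀.submatrix f g) (fun i => (a i).submatrix f g) z := by
  ext; simp [pencil_apply]

theorem map_pencil [Semiring T] [Algebra R T] (f : S →ₐ[R] T) (a₀ : Matrix m n R)
    (a : X → Matrix m n R) (z : X → S) :
    (pencil a₀ a z).map f = pencil a₀ a fun i => f (z i) := by
  ext; simp [pencil_apply]

theorem conjTranspose_pencil [StarRing R] [StarRing S] [StarModule R S] (a₀ : Matrix m n R)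
    (a : X → Matrix m n R) {z : X → S} (hz : ∀ i, IsSelfAdjoint (z i)) :
    (pencil a₀ a z)ᴴ = pencil a₀ᴴ (fun i => (a i)ᴴ) z := by
  ext; simp [pencil_apply, star_sum, (hz _).star_eq]

theorem isUnit_pencil_reindex_iff [Fintype m] [Fintype n] [DecidableEq m] [DecidableEq n]
    (e : m ≃ n) (a₀ : Matrix m m R) (a : X → Matrix m m R) (z : X → S) :
    IsUnit (pencil (reindex e e a₀) (fun i => reindex e e (a i)) z) ↔ IsUnit (pencil a₀ a z) := by
  have := MulEquiv.isUnit_map (reindexAlgEquiv R S e) (x := pencil a₀ a z)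
  rwa [coe_reindexAlgEquiv, reindex_apply, submatrix_pencil] at this

theorem pencil_hermitianDilation [StarRing R] [StarRing S] [StarModule R S] (a₀ : Matrix n n R)
    (a : X → Matrix n n R) {z : X → S} (hz : ∀ i, IsSelfAdjoint (z i)) :
    pencil (hermitianDilation a₀) (fun i => hermitianDilation (a i)) z =
      hermitianDilation (pencil a₀ a z) := by
  simp only [hermitianDilation, pencil_fromBlocks, conjTranspose_pencil a₀ a hz]
  simp [pencil, Matrix.map_zero]

end Pencil

end Matrix

open Matrix

namespace FreeAlgebra

variable {R X : Type*} [CommRing R] [Fintype X]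

structure LinearRep (x : FreeAlgebra R X) where
  idx : Type
  [fintype : Fintype idx]
  [decEq : DecidableEq idx]
  u : Matrix Unit idx R
  v : Matrix idx Unit R
  c₀ : Matrix idx idx R
  c : X → Matrix idx idx R
  L : (Matrix idx idx (FreeAlgebra R X))ˣ
  val_L : (L : Matrix idx idx (FreeAlgebra R X)) = pencil c₀ c (ι R)
  scalar_eq : scalar Unit x = u.map (algebraMap R (FreeAlgebra R X)) *
    (↑L⁻¹ : Matrix idx idx (FreeAlgebra R X)) * v.map (algebraMap R (FreeAlgebra R X))

attribute [instance] LinearRep.fintype LinearRep.decEq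

namespace LinearRep

protected def algebraMap (r : R) : LinearRep (algebraMap R (FreeAlgebra R X) r) where
  idx := Unit
  u := of fun _ _ => r
  v := 1
  c₀ := 1
  c _ := 0
  L := 1
  val_L := by simp
  scalar_eq := by ext; simp

-- `[[1, -Xᵢ], [0, 1]]⁻¹ = [[1, Xᵢ], [0, 1]]`, whose corner entry is `Xᵢ`.
protected def ι [DecidableEq X] (i : X) : LinearRep (ι R i) where
  idx := Unit ⊕ Unit
  u := fromCols 1 0
  v := fromRows 0 1
  c₀ := fromBlocks 1 0 0 1
  c j := fromBlocks 0 (of fun _ _ => if j = i then -1 else 0) 0 0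
  L := fromBlocksZero₂₁Units 1 (-of fun _ _ => ι R i) 1
  val_L := by
    rw [pencil_fromBlocks]
    ext (_ | _) (_ | _) <;> simp [pencil_apply]
  scalar_eq := by
    ext
    simp [fromCols_map, fromRows_map, fromCols_mul_fromBlocks, fromCols_mul_fromRows]

variable {x y : FreeAlgebra R X}

protected def add (ρ : LinearRep x) (σ : LinearRep y) : LinearRep (x + y) where
  idx := ρ.idx ⊕ σ.idx
  u := fromCols ρ.u σ.u
  v := fromRows ρ.v σ.v
  c₀ := fromBlocks ρ.c₀ 0 0 σ.c₀
  c i := fromBlocks (ρ.c i) 0 0 (σ.c i)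
  L := fromBlocksZero₂₁Units ρ.L 0 σ.L
  val_L := by
    rw [pencil_fromBlocks, val_fromBlocksZero₂₁Units, ρ.val_L, σ.val_L]
    simp
  scalar_eq := by
    rw [map_add, ρ.scalar_eq, σ.scalar_eq]
    simp [fromCols_map, fromRows_map, fromCols_mul_fromBlocks, fromCols_mul_fromRows]

-- The off-diagonal block of `[[L₁, -v₁u₂], [0, L₂]]⁻¹` is `L₁⁻¹v₁u₂L₂⁻¹`, so cutting it down by
-- `[u₁, 0]` and `[0, v₂]` gives `(u₁L₁⁻¹v₁)(u₂L₂⁻¹v₂)`.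
protected def mul (ρ : LinearRep x) (σ : LinearRep y) : LinearRep (x * y) where
  idx := ρ.idx ⊕ σ.idx
  u := fromCols ρ.u 0
  v := fromRows 0 σ.v
  c₀ := fromBlocks ρ.c₀ (-(ρ.v * σ.u)) 0 σ.c₀
  c i := fromBlocks (ρ.c i) 0 0 (σ.c i)
  L := fromBlocksZero₂₁Units ρ.L (-(ρ.v * σ.u).map (algebraMap R (FreeAlgebra R X))) σ.L
  val_L := by
    rw [pencil_fromBlocks, val_fromBlocksZero₂₁Units, ρ.val_L, σ.val_L]
    simp [Matrix.map_neg, Matrix.map_mul]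
  scalar_eq := by
    rw [map_mul, ρ.scalar_eq, σ.scalar_eq]
    simp [fromCols_map, fromRows_map, fromCols_mul_fromBlocks, fromCols_mul_fromRows,
      Matrix.map_mul, Matrix.mul_assoc]

end LinearRep

theorem nonempty_linearRep [DecidableEq X] (x : FreeAlgebra R X) : Nonempty (LinearRep x) := by
  induction x using FreeAlgebra.induction with
  | grade0 r => exact ⟨.algebraMap r⟩
  | grade1 i => exact ⟨.ι i⟩
  | mul _ _ hx hy => exact ⟨hx.some.mul hy.some⟩
  | add _ _ hx hy => exact ⟨hx.some.add hy.some⟩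

namespace LinearRep

variable {x : FreeAlgebra R X} (ρ : LinearRep x)

def linearization₀ : Matrix (Unit ⊕ ρ.idx) (Unit ⊕ ρ.idx) R :=
  fromBlocks 0 ρ.u ρ.v ρ.c₀

def linearization (i : X) : Matrix (Unit ⊕ ρ.idx) (Unit ⊕ ρ.idx) R :=
  fromBlocks 0 0 0 (ρ.c i)

theorem isUnit_lift_iff {S : Type*} [Ring S] [Algebra R S] (z : X → S) :
    IsUnit (lift R z x) ↔ IsUnit (pencil ρ.linearization₀ ρ.linearization z) := by
  let Lz := Units.map (lift R z).mapMatrix.toMonoidHom ρ.L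
  have hLz : (Lz : Matrix ρ.idx ρ.idx S) = pencil ρ.c₀ ρ.c z := by
    simp [Lz, ρ.val_L, map_pencil]
  have hpencil : pencil ρ.linearization₀ ρ.linearization z =
      fromBlocks 0 (ρ.u.map (algebraMap R S)) (ρ.v.map (algebraMap R S)) Lz := by
    change pencil (fromBlocks 0 ρ.u ρ.v ρ.c₀) (fun i => fromBlocks 0 0 0 (ρ.c i)) z = _
    rw [pencil_fromBlocks, hLz]
    simp
  have hschur : ρ.u.map (algebraMap R S) * (↑Lz⁻¹ : Matrix ρ.idx ρ.idx S) *
      ρ.v.map (algebraMap R S) = scalar Unit (lift R z x) := by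
    have hcomp : ⇑(lift R z) ∘ ⇑(algebraMap R (FreeAlgebra R X)) = algebraMap R S :=
      funext (AlgHom.commutes _)
    have := congrArg (Matrix.map · (lift R z)) ρ.scalar_eq
    simpa [Lz, Matrix.map_mul, hcomp] using this.symm
  rw [hpencil, isUnit_fromBlocks_iff_of_units₂₂, zero_sub, IsUnit.neg_iff, hschur,
    isUnit_iff_isUnit_apply_of_unique]
  simp

end LinearRep

end FreeAlgebra

theorem spectra_inclusion_of_linear_spectra_inclusion_general {A B : Type*}
    [CStarAlgebra A] [CStarAlgebra B]
    (r : ℕ) (x : Fin r → A) (y : Fin r → B)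
    (hx : ∀ i, IsSelfAdjoint (x i)) (hy : ∀ i, IsSelfAdjoint (y i))
    (h : ∀ (m : ℕ) (a0 : Matrix (Fin m) (Fin m) ℂ) (a : Fin r → Matrix (Fin m) (Fin m) ℂ),
      IsSelfAdjoint a0 → (∀ i, IsSelfAdjoint (a i)) →
      spectrum ℂ (a0.map (algebraMap ℂ B) + ∑ i, (a i).map fun c => c • y i) ⊆
        spectrum ℂ (a0.map (algebraMap ℂ A) + ∑ i, (a i).map fun c => c • x i)) :
    ∀ p : FreeAlgebra ℂ (Fin r),
      spectrum ℂ (FreeAlgebra.lift ℂ y p) ⊆ spectrum ℂ (FreeAlgebra.lift ℂ x p) := by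
  have hlin : ∀ (n : Type) [Fintype n] [DecidableEq n] (a₀ : Matrix n n ℂ)
      (a : Fin r → Matrix n n ℂ), IsUnit (pencil a₀ a x) → IsUnit (pencil a₀ a y) := by
    intro n _ _ a₀ a hxa
    let e := Fintype.equivFin (n ⊕ n)
    have hsub := h _ ((hermitianDilation a₀).reindex e e)
      (fun i => (hermitianDilation (a i)).reindex e e)
      ((isHermitian_hermitianDilation a₀).submatrix e.symm)
      (fun i => (isHermitian_hermitianDilation (a i)).submatrix e.symm)
    rw [← isUnit_hermitianDilation_iff, ← pencil_hermitianDilation a₀ a hy,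
      ← isUnit_pencil_reindex_iff e, ← spectrum.zero_notMem_iff ℂ]
    rw [← isUnit_hermitianDilation_iff, ← pencil_hermitianDilation a₀ a hx,
      ← isUnit_pencil_reindex_iff e, ← spectrum.zero_notMem_iff ℂ] at hxa
    exact fun h0 => hxa (hsub h0)
  intro p μ hμ
  rw [spectrum.mem_iff] at hμ ⊢
  contrapose! hμ
  obtain ⟨ρ⟩ := FreeAlgebra.nonempty_linearRep (algebraMap ℂ (FreeAlgebra ℂ (Fin r)) μ - p)
  simpa using (ρ.isUnit_lift_iff y).2 (hlin _ _ _ ((ρ.isUnit_lift_iff x).1 (by simpa using hμ)))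

/-- If for all `m` and all self-adjoint matrix coefficients
`a₀, a₁, …, a_r ∈ M_m(ℂ)` the spectrum of `a₀ ⊗ 1 + Σ aᵢ ⊗ xᵢ` contains that of
`a₀ ⊗ 1 + Σ aᵢ ⊗ yᵢ`, then for every polynomial `p` in `r` non-commuting variables the
spectrum of `p(x₁,…,x_r)` contains that of `p(y₁,…,y_r)`. -/
theorem spectra_inclusion_of_linear_spectra_inclusion {A B : Type*}
    [CStarAlgebra A] [CStarAlgebra B] [StarModule ℂ A] [StarModule ℂ B]
    (r : ℕ) (x : Fin r → A) (y : Fin r → B)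
    (hx : ∀ i, IsSelfAdjoint (x i)) (hy : ∀ i, IsSelfAdjoint (y i))
    (h : ∀ (m : ℕ) (a0 : Matrix (Fin m) (Fin m) ℂ) (a : Fin r → Matrix (Fin m) (Fin m) ℂ),
      IsSelfAdjoint a0 → (∀ i, IsSelfAdjoint (a i)) →
      spectrum ℂ (a0.map (algebraMap ℂ B) + ∑ i, (a i).map fun c => c • y i) ⊆
        spectrum ℂ (a0.map (algebraMap ℂ A) + ∑ i, (a i).map fun c => c • x i)) :
    ∀ p : FreeAlgebra ℂ (Fin r),
      spectrum ℂ (FreeAlgebra.lift ℂ y p) ⊆ spectrum ℂ (FreeAlgebra.lift ℂ x p) :=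
  spectra_inclusion_of_linear_spectra_inclusion_general r x y hx hy h
end

section
/- Let 𝒜 and ℬ be unital C*-algebras with x_1,…,x_r ∈ 𝒜 and y_1,…,y_r ∈ ℬ self-adjoint, and suppose that for every polynomial p ∈ ℂ⟨X_1,…,X_r⟩, σ(p(x_1,…,x_r)) ⊇ σ(p(y_1,…,y_r)). Then ‖p(x_1,…,x_r)‖ ≥ ‖p(y_1,…,y_r)‖ for all p ∈ ℂ⟨X_1,…,X_r⟩, and consequently there exists a unital *-homomorphism φ: C*(1_𝒜, x_1,…,x_r) → C*(1_ℬ, y_1,…,y_r) with φ(x_i) = y_i for i = 1,…,r. -/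
/-!
Pair the generators as `zᵢ = (xᵢ, yᵢ)` in `A × B`. Since the `zᵢ` are self-adjoint, the
star-subalgebra they generate consists of the values `p(z)` of noncommutative polynomials, and so
contains `p(z)⋆ p(z) = q(z)` for some `q`. The spectral inclusion for `q` bounds spectral radii,
and the C⋆-identity `‖a‖² = r(a⋆a)` turns this into `‖p(y)‖ ≤ ‖p(x)‖`. Hence on the closure `G`
of that star-subalgebra the first projection is isometric; `G` being complete, it maps `G` onto
`C⋆(1, x)`, and composing its inverse with the second projection gives the star homomorphism.
-/

theorem spectralRadius_le_of_spectrum_subset {𝕜 A B : Type*} [NormedField 𝕜] [Ring A]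
    [Algebra 𝕜 A] [Ring B] [Algebra 𝕜 B] {a : A} {b : B} (h : spectrum 𝕜 b ⊆ spectrum 𝕜 a) :
    spectralRadius 𝕜 b ≤ spectralRadius 𝕜 a :=
  biSup_mono h

theorem CStarRing.norm_le_of_spectrum_star_mul_self_subset {A B : Type*} [CStarAlgebra A]
    [CStarAlgebra B] {a : A} {b : B} (h : spectrum ℂ (star b * b) ⊆ spectrum ℂ (star a * a)) :
    ‖b‖ ≤ ‖a‖ := by
  have h_radius := spectralRadius_le_of_spectrum_subset h
  rw [IsSelfAdjoint.star_mul_self b |>.spectralRadius_eq_nnnorm,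
    IsSelfAdjoint.star_mul_self a |>.spectralRadius_eq_nnnorm, CStarRing.nnnorm_star_mul_self,
    CStarRing.nnnorm_star_mul_self, ENNReal.coe_le_coe] at h_radius
  exact mul_self_le_mul_self_iff (norm_nonneg b) (norm_nonneg a) |>.mpr h_radius

theorem IsSelfAdjoint.prodMk {A B : Type*} [Star A] [Star B] {a : A} {b : B}
    (ha : IsSelfAdjoint a) (hb : IsSelfAdjoint b) : IsSelfAdjoint (a, b) :=
  Prod.ext ha.star_eq hb.star_eq

theorem StarAlgebra.mem_adjoin_range_iff_of_isSelfAdjoint {R A ι : Type*} [CommSemiring R]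
    [StarRing R] [Semiring A] [StarRing A] [Algebra R A] [StarModule R A] {x : ι → A}
    (hx : ∀ i, IsSelfAdjoint (x i)) {a : A} :
    a ∈ StarAlgebra.adjoin R (Set.range x) ↔ ∃ p, FreeAlgebra.lift R x p = a := by
  have h_star : star (Set.range x) = Set.range x := by
    rw [← Set.image_star, ← Set.range_comp]
    exact congrArg Set.range (funext fun i => (hx i).star_eq)
  rw [← StarSubalgebra.mem_toSubalgebra, StarAlgebra.adjoin_toSubalgebra, h_star, Set.union_self,
    Algebra.adjoin_range_eq_range_freeAlgebra_lift, AlgHom.mem_range]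

theorem FreeAlgebra.lift_prodMk {R A B ι : Type*} [CommSemiring R] [Semiring A] [Algebra R A]
    [Semiring B] [Algebra R B] (x : ι → A) (y : ι → B) :
    FreeAlgebra.lift R (fun i => (x i, y i)) = (FreeAlgebra.lift R x).prod (FreeAlgebra.lift R y) :=
  FreeAlgebra.hom_ext <| funext fun i => by simp

namespace StarSubalgebra

variable {R A B : Type*} [CommSemiring R] [StarRing R]
  [TopologicalSpace A] [Semiring A] [Algebra R A] [StarRing A] [StarModule R A]
  [IsSemitopologicalSemiring A] [ContinuousStar A]
  [TopologicalSpace B] [Semiring B] [Algebra R B] [StarRing B] [StarModule R B]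
  [IsSemitopologicalSemiring B] [ContinuousStar B]

def topologicalClosureMap (S : StarSubalgebra R A) (f : A →⋆ₐ[R] B) (hf : Continuous f) :
    S.topologicalClosure →⋆ₐ[R] (S.map f).topologicalClosure :=
  (f.comp S.topologicalClosure.subtype).codRestrict _ fun a =>
    S.map_topologicalClosure_le f hf ⟨a, a.2, rfl⟩

end StarSubalgebra

section Graph

variable {A B : Type*} [CStarAlgebra A] [CStarAlgebra B]

theorem norm_snd_le_norm_fst_of_mem_adjoin {ι : Type*} {x : ι → A} {y : ι → B}
    (hx : ∀ i, IsSelfAdjoint (x i)) (hy : ∀ i, IsSelfAdjoint (y i))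
    (h : ∀ p : FreeAlgebra ℂ ι,
      spectrum ℂ (FreeAlgebra.lift ℂ y p) ⊆ spectrum ℂ (FreeAlgebra.lift ℂ x p))
    {d : A × B} (hd : d ∈ StarAlgebra.adjoin ℂ (Set.range fun i => (x i, y i))) :
    ‖d.2‖ ≤ ‖d.1‖ := by
  obtain ⟨p, hp⟩ := (StarAlgebra.mem_adjoin_range_iff_of_isSelfAdjoint
    fun i => (hx i).prodMk (hy i)).mp <| mul_mem (star_mem hd) hd
  rw [FreeAlgebra.lift_prodMk, AlgHom.prod_apply, Prod.ext_iff] at hp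
  dsimp only at hp
  have h_spectrum := h p
  rw [hp.1, hp.2] at h_spectrum
  exact CStarRing.norm_le_of_spectrum_star_mul_self_subset h_spectrum

theorem norm_snd_le_norm_fst_of_mem_topologicalClosure {S : StarSubalgebra ℂ (A × B)}
    (hS : ∀ d ∈ S, ‖d.2‖ ≤ ‖d.1‖) {d : A × B} (hd : d ∈ S.topologicalClosure) :
    ‖d.2‖ ≤ ‖d.1‖ :=
  closure_minimal hS (isClosed_le continuous_snd.norm continuous_fst.norm) hd

theorem bijective_topologicalClosureMap_fst {S : StarSubalgebra ℂ (A × B)}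
    (hS : ∀ d ∈ S, ‖d.2‖ ≤ ‖d.1‖) :
    Function.Bijective (S.topologicalClosureMap (StarAlgHom.fst ℂ A B) continuous_fst) := by
  set π := (StarAlgHom.fst ℂ A B).comp S.topologicalClosure.subtype
  have h_isometry : Isometry π := AddMonoidHomClass.isometry_of_norm π fun d =>
    (max_eq_left (norm_snd_le_norm_fst_of_mem_topologicalClosure hS d.2)).symm
  refine ⟨fun d₁ d₂ h => h_isometry.injective (congrArg Subtype.val h), fun a => ?_⟩
  have h_closed : IsClosed (Set.range π) := h_isometry.isClosedEmbedding.isClosed_range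
  have h_sub : (S.map (StarAlgHom.fst ℂ A B) : Set A) ⊆ Set.range π := by
    rintro _ ⟨d, hd, rfl⟩
    exact ⟨⟨d, S.le_topologicalClosure hd⟩, rfl⟩
  obtain ⟨d, hd⟩ := closure_minimal h_sub h_closed a.2
  exact ⟨d, Subtype.ext hd⟩

theorem exists_starAlgHom_apply_fst_eq_snd {S : StarSubalgebra ℂ (A × B)}
    {X : StarSubalgebra ℂ A} {Y : StarSubalgebra ℂ B} (hS : ∀ d ∈ S, ‖d.2‖ ≤ ‖d.1‖)
    (hX : S.map (StarAlgHom.fst ℂ A B) = X) (hY : S.map (StarAlgHom.snd ℂ A B) = Y) :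
    ∃ φ : X.topologicalClosure →⋆ₐ[ℂ] Y.topologicalClosure,
      ∀ d ∈ S, ∀ hd : d.1 ∈ X.topologicalClosure, (φ ⟨d.1, hd⟩ : B) = d.2 := by
  subst hX hY
  set e := StarAlgEquiv.ofBijective _ (bijective_topologicalClosureMap_fst hS)
  refine ⟨(S.topologicalClosureMap (StarAlgHom.snd ℂ A B) continuous_snd).comp
    e.symm.toStarAlgHom, fun d hd hd₁ => ?_⟩
  have h_inv : e.symm ⟨d.1, hd₁⟩ = ⟨d, S.le_topologicalClosure hd⟩ :=
    e.symm_apply_eq.mpr rfl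
  exact congrArg (fun d : S.topologicalClosure => (d : A × B).2) h_inv

end Graph

theorem star_hom_of_spectra_inclusion_general {A B : Type*}
    [CStarAlgebra A] [CStarAlgebra B]
    (r : ℕ) (x : Fin r → A) (y : Fin r → B)
    (hx : ∀ i, IsSelfAdjoint (x i)) (hy : ∀ i, IsSelfAdjoint (y i))
    (h : ∀ p : FreeAlgebra ℂ (Fin r),
      spectrum ℂ (FreeAlgebra.lift ℂ y p) ⊆ spectrum ℂ (FreeAlgebra.lift ℂ x p)) :
    (∀ p : FreeAlgebra ℂ (Fin r),
        ‖FreeAlgebra.lift ℂ y p‖ ≤ ‖FreeAlgebra.lift ℂ x p‖) ∧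
      ∃ φ : (StarAlgebra.adjoin ℂ (Set.range x)).topologicalClosure →⋆ₐ[ℂ]
          (StarAlgebra.adjoin ℂ (Set.range y)).topologicalClosure,
        ∀ i : Fin r,
          (φ ⟨x i, StarSubalgebra.le_topologicalClosure _
              (StarAlgebra.subset_adjoin ℂ _ (Set.mem_range_self i))⟩ : B) = y i := by
  set S := StarAlgebra.adjoin ℂ (Set.range fun i => (x i, y i))
  have hS : ∀ d ∈ S, ‖d.2‖ ≤ ‖d.1‖ := fun _ => norm_snd_le_norm_fst_of_mem_adjoin hx hy h
  refine ⟨fun p => ?_, ?_⟩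
  · have h_mem : FreeAlgebra.lift ℂ (fun i => (x i, y i)) p ∈ S :=
      (StarAlgebra.mem_adjoin_range_iff_of_isSelfAdjoint fun i => (hx i).prodMk (hy i)).mpr
        ⟨p, rfl⟩
    simpa only [FreeAlgebra.lift_prodMk, AlgHom.prod_apply] using hS _ h_mem
  · obtain ⟨φ, hφ⟩ := exists_starAlgHom_apply_fst_eq_snd hS
      (by rw [StarAlgHom.map_adjoin, ← Set.range_comp])
      (by rw [StarAlgHom.map_adjoin, ← Set.range_comp])
    exact ⟨φ, fun i => hφ _ (StarAlgebra.subset_adjoin ℂ _ ⟨i, rfl⟩) _⟩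

/-- If the spectra of all polynomial expressions in `x₁,…,x_r` contain the
corresponding spectra in `y₁,…,y_r`, then norms dominate and there is a unital
*-homomorphism `C*(1, x₁,…,x_r) → C*(1, y₁,…,y_r)` sending `xᵢ ↦ yᵢ`. -/
theorem star_hom_of_spectra_inclusion {A B : Type*}
    [CStarAlgebra A] [CStarAlgebra B] [StarModule ℂ A] [StarModule ℂ B]
    (r : ℕ) (x : Fin r → A) (y : Fin r → B)
    (hx : ∀ i, IsSelfAdjoint (x i)) (hy : ∀ i, IsSelfAdjoint (y i))
    (h : ∀ p : FreeAlgebra ℂ (Fin r),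
      spectrum ℂ (FreeAlgebra.lift ℂ y p) ⊆ spectrum ℂ (FreeAlgebra.lift ℂ x p)) :
    (∀ p : FreeAlgebra ℂ (Fin r),
        ‖FreeAlgebra.lift ℂ y p‖ ≤ ‖FreeAlgebra.lift ℂ x p‖) ∧
      ∃ φ : (StarAlgebra.adjoin ℂ (Set.range x)).topologicalClosure →⋆ₐ[ℂ]
          (StarAlgebra.adjoin ℂ (Set.range y)).topologicalClosure,
        ∀ i : Fin r,
          (φ ⟨x i, StarSubalgebra.le_topologicalClosure _
              (StarAlgebra.subset_adjoin ℂ _ (Set.mem_range_self i))⟩ : B) = y i :=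
  star_hom_of_spectra_inclusion_general r x y hx hy h
end

section
/- Let k, r be positive integers, let a_1,…,a_r ∈ M_k(ℂ), and let z, w ∈ GL_k(ℂ) satisfy Σ_{i=1}^r a_i z a_i + z^{-1} = Σ_{i=1}^r a_i w a_i + w^{-1}. If there exists T ∈ GL_k(ℂ) such that Σ_{i=1}^r ‖w a_i‖ · ‖T a_i z T^{-1}‖ < 1, then z = w. -/
open scoped Matrix.Norms.L2Operator

/-- If `z, w ∈ GL_k(ℂ)` satisfy `Σ aᵢ z aᵢ + z⁻¹ = Σ aᵢ w aᵢ + w⁻¹` and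
there is `T ∈ GL_k(ℂ)` with `Σ ‖w aᵢ‖ ‖T aᵢ z T⁻¹‖ < 1` (operator norm), then `z = w`. -/
theorem fixed_point_uniqueness (k r : ℕ) (hk : 0 < k) (hr : 0 < r)
    (a : Fin r → Matrix (Fin k) (Fin k) ℂ)
    (z w : Matrix (Fin k) (Fin k) ℂ) (hz : IsUnit z) (hw : IsUnit w)
    (heq : ∑ i, a i * z * a i + z⁻¹ = ∑ i, a i * w * a i + w⁻¹)
    (T : Matrix (Fin k) (Fin k) ℂ) (hT : IsUnit T)
    (hbound : ∑ i, ‖w * a i‖ * ‖T * a i * z * T⁻¹‖ < 1) :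
    z = w := by
  have hz' : IsUnit z.det := (Matrix.isUnit_iff_isUnit_det z).mp hz
  have hw' : IsUnit w.det := (Matrix.isUnit_iff_isUnit_det w).mp hw
  have hT' : IsUnit T.det := (Matrix.isUnit_iff_isUnit_det T).mp hT
  set d := w - z with hd
  have hsub : z⁻¹ - w⁻¹ = ∑ i, a i * d * a i := by
    have h1 : z⁻¹ - w⁻¹ = (∑ i, a i * w * a i) - ∑ i, a i * z * a i := by
      rw [sub_eq_sub_iff_add_eq_add, add_comm, heq, add_comm]
    rw [h1, ← Finset.sum_sub_distrib]
    refine Finset.sum_congr rfl fun i _ => ?_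
    rw [hd]; noncomm_ring
  have h2 : w * (z⁻¹ - w⁻¹) * z = d := by
    rw [Matrix.mul_sub, Matrix.sub_mul, mul_assoc w z⁻¹ z, Matrix.nonsing_inv_mul z hz',
      Matrix.mul_nonsing_inv w hw', mul_one, one_mul]
  have hkey : d = ∑ i, w * a i * d * (a i * z) := by
    calc d = w * (z⁻¹ - w⁻¹) * z := h2.symm
      _ = w * (∑ i, a i * d * a i) * z := by rw [hsub]
      _ = ∑ i, w * a i * d * (a i * z) := by
          rw [Finset.mul_sum, Finset.sum_mul]
          refine Finset.sum_congr rfl fun i _ => ?_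
          noncomm_ring
  set e := d * T⁻¹ with hedef
  have he : e = ∑ i, (w * a i) * e * (T * a i * z * T⁻¹) := by
    calc e = (∑ i, w * a i * d * (a i * z)) * T⁻¹ := by rw [hedef, ← hkey]
      _ = ∑ i, (w * a i) * e * (T * a i * z * T⁻¹) := by
          rw [Finset.sum_mul]
          refine Finset.sum_congr rfl fun i _ => ?_
          rw [hedef, show (w * a i) * (d * T⁻¹) * (T * a i * z * T⁻¹)
            = w * a i * d * (T⁻¹ * T) * (a i * z) * T⁻¹ by noncomm_ring,
            Matrix.nonsing_inv_mul T hT', mul_one]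
  have hnorm : ‖e‖ ≤ (∑ i, ‖w * a i‖ * ‖T * a i * z * T⁻¹‖) * ‖e‖ := by
    calc ‖e‖ = ‖∑ i, (w * a i) * e * (T * a i * z * T⁻¹)‖ := by rw [← he]
      _ ≤ ∑ i, ‖(w * a i) * e * (T * a i * z * T⁻¹)‖ := norm_sum_le _ _
      _ ≤ ∑ i, ‖w * a i‖ * ‖T * a i * z * T⁻¹‖ * ‖e‖ := by
          refine Finset.sum_le_sum fun i _ => ?_
          calc ‖(w * a i) * e * (T * a i * z * T⁻¹)‖
              ≤ ‖(w * a i) * e‖ * ‖T * a i * z * T⁻¹‖ := norm_mul_le _ _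
            _ ≤ ‖w * a i‖ * ‖e‖ * ‖T * a i * z * T⁻¹‖ := by
                gcongr
                exact norm_mul_le _ _
            _ = ‖w * a i‖ * ‖T * a i * z * T⁻¹‖ * ‖e‖ := by ring
      _ = (∑ i, ‖w * a i‖ * ‖T * a i * z * T⁻¹‖) * ‖e‖ := by rw [Finset.sum_mul]
  have he0 : e = 0 := by
    by_contra h
    have hpos : 0 < ‖e‖ := norm_pos_iff.mpr h
    nlinarith [hnorm, hbound, hpos]
  have hd0 : d = 0 := by
    have h3 : e * T = 0 := by rw [he0]; simp
    rw [hedef, mul_assoc, Matrix.nonsing_inv_mul T hT', mul_one] at h3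
    exact h3
  have : w = z := sub_eq_zero.mp hd0
  exact this.symm
end

section
/- Let 𝒜 be a unital C*-algebra, e a projection in 𝒜, and q a self-adjoint element with ‖e − q‖ < 1/8. Then σ(q) ⊆ (−1/8, 1/8) ∪ (7/8, 9/8), and if φ: ℝ → ℝ is a continuous function with φ = 0 on (−1/4, 1/4) and φ = 1 on (3/4, 5/4) and 0 ≤ φ ≤ 1, then φ(q) is a projection satisfying ‖φ(q) − e‖ < 1/4. -/
/-!
The spectrum of the projection `e` lies in `{0, 1}`. For self-adjoint `a`, continuous functional
calculus bounds the resolvent, `‖(x - a)⁻¹‖ ≤ dist(x, σ(a))⁻¹`, so `x - b` stays invertible as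
long as `‖a - b‖ < dist(x, σ(a))`. Hence `σ(q)` lies within `‖e - q‖ < 1/8` of `{0, 1}`, where
`φ` takes only the values `0` and `1` and moves points by at most `1/8`. So `φ(q)` is a
projection with `‖φ(q) - q‖ ≤ 1/8`.
-/

namespace IsSelfAdjoint

variable {A : Type*} [CStarAlgebra A] {a : A}

theorem exists_units_val_eq_algebraMap_sub_norm_inv_le (ha : IsSelfAdjoint a) {x r : ℝ}
    (hr : 0 < r) (hx : ∀ t ∈ spectrum ℝ a, r ≤ dist x t) :
    ∃ u : Aˣ, (u : A) = algebraMap ℝ A x - a ∧ ‖(↑u⁻¹ : A)‖ ≤ r⁻¹ := by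
  have hx₀ : ∀ t ∈ spectrum ℝ a, x - t ≠ 0 := fun t ht h =>
    hr.not_ge (by simpa [Real.dist_eq, h] using hx t ht)
  refine ⟨cfcUnits (fun t : ℝ => x - t) a hx₀, ?_, ?_⟩
  · change cfc (fun t : ℝ => x - t) a = _
    rw [cfc_sub _ _, cfc_const x a, cfc_id' ℝ a]
  · refine norm_cfc_le (inv_nonneg.mpr hr.le) fun t ht => ?_
    rw [norm_inv]
    exact inv_anti₀ hr ((hx t ht).trans_eq (dist_eq_norm x t))

theorem notMem_spectrum_of_norm_sub_lt (ha : IsSelfAdjoint a) (b : A) {x r : ℝ} (hr : 0 < r)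
    (hx : ∀ t ∈ spectrum ℝ a, r ≤ dist x t) (hab : ‖a - b‖ < r) : x ∉ spectrum ℝ b := by
  nontriviality A
  obtain ⟨u, hu, hu_inv⟩ := ha.exists_units_val_eq_algebraMap_sub_norm_inv_le hr hx
  have hclose : ‖a - b‖ < ‖(↑u⁻¹ : A)‖⁻¹ :=
    hab.trans_le ((le_inv_comm₀ hr (Units.norm_pos _)).mpr hu_inv)
  refine fun hxb => hxb ⟨u.add (a - b) hclose, ?_⟩
  rw [Units.val_add, hu, sub_add_sub_cancel]

theorem exists_mem_spectrum_dist_le (ha : IsSelfAdjoint a) {b : A} {x : ℝ}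
    (hx : x ∈ spectrum ℝ b) : ∃ t ∈ spectrum ℝ a, dist x t ≤ ‖a - b‖ := by
  by_contra! hfar
  obtain ⟨r, hr, hxr⟩ := (spectrum.isCompact a).exists_forall_le' (by fun_prop) hfar
  exact ha.notMem_spectrum_of_norm_sub_lt b ((norm_nonneg _).trans_lt hr) hxr hr hx

end IsSelfAdjoint

/-- If `e` is a projection and `q` self-adjoint with `‖e - q‖ < 1/8` in a
unital C*-algebra, then `σ(q) ⊆ (-1/8,1/8) ∪ (7/8,9/8)`, and for any continuous
`φ : ℝ → ℝ` vanishing on `(-1/4,1/4)`, equal to `1` on `(3/4,5/4)` and with values in `[0,1]`,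
the element `φ(q)` is a projection with `‖φ(q) - e‖ < 1/4`. -/
theorem projection_from_functional_calculus {A : Type*} [CStarAlgebra A]
    (e q : A) (he : IsSelfAdjoint e) (he2 : e * e = e) (hq : IsSelfAdjoint q)
    (hd : ‖e - q‖ < 1 / 8) :
    spectrum ℝ q ⊆ Set.Ioo (-(1 / 8) : ℝ) (1 / 8) ∪ Set.Ioo (7 / 8 : ℝ) (9 / 8) ∧
    ∀ φ : ℝ → ℝ, Continuous φ →
      (∀ x ∈ Set.Ioo (-(1 / 4) : ℝ) (1 / 4), φ x = 0) →
      (∀ x ∈ Set.Ioo (3 / 4 : ℝ) (5 / 4), φ x = 1) →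
      (∀ x : ℝ, φ x ∈ Set.Icc (0 : ℝ) 1) →
      IsSelfAdjoint (cfc φ q) ∧ cfc φ q * cfc φ q = cfc φ q ∧ ‖cfc φ q - e‖ < 1 / 4 := by
  have hspec : spectrum ℝ q ⊆ Set.Ioo (-(1 / 8) : ℝ) (1 / 8) ∪ Set.Ioo (7 / 8 : ℝ) (9 / 8) := by
    intro x hx
    obtain ⟨t, ht, hxt⟩ := he.exists_mem_spectrum_dist_le hx
    rw [Real.dist_eq, abs_le] at hxt
    rcases IsIdempotentElem.spectrum_subset ℝ he2 ht with rfl | rfl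
    · exact .inl ⟨by linarith, by linarith⟩
    · exact .inr ⟨by linarith, by linarith⟩
  refine ⟨hspec, fun φ hφ hφ0 hφ1 _ => ?_⟩
  have hφ_spec : ∀ x ∈ spectrum ℝ q, (φ x = 0 ∨ φ x = 1) ∧ |φ x - x| ≤ 1 / 8 := by
    intro x hx
    rcases hspec hx with ⟨hx₁, hx₂⟩ | ⟨hx₁, hx₂⟩
    · rw [hφ0 x ⟨by linarith, by linarith⟩, abs_le]
      exact ⟨.inl rfl, by linarith, by linarith⟩
    · rw [hφ1 x ⟨by linarith, by linarith⟩, abs_le]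
      exact ⟨.inr rfl, by linarith, by linarith⟩
  have hidem : cfc φ q * cfc φ q = cfc φ q := by
    rw [← cfc_mul φ φ q]
    refine cfc_congr fun x hx => ?_
    rcases (hφ_spec x hx).1 with h | h <;> simp [h]
  have hnear : ‖cfc φ q - q‖ ≤ 1 / 8 := by
    rw [show cfc φ q - q = cfc (fun x => φ x - x) q by rw [cfc_sub .., cfc_id' ℝ q]]
    exact norm_cfc_le (by norm_num) fun x hx => (hφ_spec x hx).2
  refine ⟨cfc_predicate φ q, hidem, ?_⟩
  calc ‖cfc φ q - e‖ ≤ ‖cfc φ q - q‖ + ‖q - e‖ := norm_sub_le_norm_sub_add_norm_sub _ _ _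
    _ < 1 / 4 := by rw [norm_sub_rev q e]; linarith
end

section
/- Let H be a complex Hilbert space, let x be a self-adjoint element of B(H) (or of any unital C*-algebra), let m ∈ ℕ, and let λ ∈ M_m(ℂ) be such that Im λ := (λ − λ*)/(2i) is positive definite. Then λ ⊗ 1 − 1_m ⊗ x is invertible in M_m(ℂ) ⊗ C*(x, 1), and ‖(λ ⊗ 1 − 1_m ⊗ x)^{-1}‖ ≤ ‖(Im λ)^{-1}‖. -/
open scoped Matrix.Norms.L2Operator ComplexOrder
open scoped Matrix

section Aux

variable {B : Type*} [CStarAlgebra B] [StarModule ℂ B] [PartialOrder B] [StarOrderedRing B]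

private lemma algebraMapR_selfAdjoint (r : ℝ) : star (algebraMap ℝ B r) = algebraMap ℝ B r := by
  rw [Algebra.algebraMap_eq_smul_one, ← Complex.coe_smul, star_smul, star_one, Complex.star_def,
    Complex.conj_ofReal, Complex.coe_smul]

private lemma rsmul_nonneg {r : ℝ} (hr : 0 ≤ r) {z : B} (hz : 0 ≤ z) : 0 ≤ r • z := by
  have h1 : (0:B) ≤ star (algebraMap ℝ B (Real.sqrt r)) * z * algebraMap ℝ B (Real.sqrt r) :=
    star_left_conjugate_nonneg hz _
  rwa [algebraMapR_selfAdjoint, mul_assoc, ← Algebra.commutes, ← mul_assoc, ← map_mul,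
    Real.mul_self_sqrt hr, ← Algebra.smul_def] at h1

private lemma rsmul_mono {r : ℝ} (hr : 0 ≤ r) {x y : B} (h : x ≤ y) : r • x ≤ r • y := by
  have h1 : (0:B) ≤ r • (y - x) := rsmul_nonneg hr (sub_nonneg.2 h)
  rw [smul_sub] at h1
  exact sub_nonneg.1 h1

private lemma key_resolvent (a : B) (ε : ℝ) (hε : 0 < ε)
    (h : algebraMap ℝ B ε ≤ (2 * Complex.I)⁻¹ • (a - star a)) :
    IsUnit a ∧ ‖Ring.inverse a‖ ≤ ε⁻¹ := by
  rcases subsingleton_or_nontrivial B with hB | hB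
  · refine ⟨isUnit_of_subsingleton a, ?_⟩
    rw [Subsingleton.elim (Ring.inverse a) 0, norm_zero]
    positivity
  set s : B := (2 * Complex.I)⁻¹ • (a - star a) with hs
  have h2I : (2 * Complex.I) ≠ 0 := by simp [Complex.I_ne_zero]
  have hsa : a - star a = (2 * Complex.I) • s := by
    rw [hs, smul_smul, mul_inv_cancel₀ h2I, one_smul]
  have hεnn : (0:ℝ) ≤ ε := hε.le
  have halgnn : (0:B) ≤ algebraMap ℝ B ε := by
    rw [Algebra.algebraMap_eq_smul_one]
    exact rsmul_nonneg hεnn zero_le_one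
  have hnorm2I : ‖(2 * Complex.I)⁻¹‖ = 2⁻¹ := by
    rw [norm_inv, norm_mul, Complex.norm_I, mul_one]
    norm_num
  have hs_le : ‖s‖ ≤ ‖a‖ := by
    rw [hs, norm_smul, hnorm2I]
    have h1 : ‖a - star a‖ ≤ 2 * ‖a‖ := by
      calc ‖a - star a‖ ≤ ‖a‖ + ‖star a‖ := norm_sub_le _ _
        _ = 2 * ‖a‖ := by rw [norm_star]; ring
    linarith
  have hεa : ε ≤ ‖a‖ := by
    have h1 : ‖algebraMap ℝ B ε‖ ≤ ‖s‖ :=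
      CStarAlgebra.norm_le_norm_of_nonneg_of_le halgnn h
    rw [norm_algebraMap', Real.norm_of_nonneg hεnn] at h1
    linarith
  have hM : 0 < ‖a‖ := lt_of_lt_of_le hε hεa
  set t : ℝ := ε / (‖a‖ ^ 2) with ht
  have htpos : 0 < t := by positivity
  set α : ℂ := (t : ℂ) * Complex.I with hα
  set c : B := 1 - α • star a with hc
  have hstarα : star α = -α := by
    rw [hα, Complex.star_def, map_mul, Complex.conj_ofReal, Complex.conj_I]
    ring
  have hstar_c : star c = 1 + α • a := by
    rw [hc, star_sub, star_one, star_smul, star_star, hstarα, neg_smul, sub_neg_eq_add]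
  have hαI : α * (2 * Complex.I) = ((-(2*t) : ℝ) : ℂ) := by
    push_cast
    rw [hα]
    linear_combination (2 * (t:ℂ)) * Complex.I_mul_I
  have hαα : α * α = ((-(t^2) : ℝ) : ℂ) := by
    push_cast
    rw [hα]
    linear_combination ((t:ℂ)^2) * Complex.I_mul_I
  have hsub : α • a - α • star a = -((2*t) • s) := by
    rw [← smul_sub, hsa, smul_smul, hαI, Complex.coe_smul, neg_smul]
  have hprod : (α • star a) * (α • a) = -((t^2) • (star a * a)) := by
    rw [smul_mul_assoc, mul_smul_comm, smul_smul, hαα, Complex.coe_smul, neg_smul]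
  have hexp : c * star c = 1 - (2*t) • s + (t^2) • (star a * a) := by
    rw [hc, hstar_c, sub_mul, one_mul, mul_add, mul_one, hprod]
    rw [sub_add_eq_sub_sub, sub_neg_eq_add, add_sub_assoc, hsub]
    abel
  set δ : ℝ := 1 - 2*t*ε + t^2 * ‖a‖^2 with hδ
  have hδval : δ = 1 - ε^2 / ‖a‖^2 := by
    rw [hδ, ht]
    field_simp
    ring
  have hδ0 : 0 ≤ δ := by
    rw [hδval]
    have h1 : ε^2 / ‖a‖^2 ≤ 1 := by
      rw [div_le_one (by positivity)]
      nlinarith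
    linarith
  have hδlt : δ < 1 := by
    rw [hδval]
    have h1 : 0 < ε^2 / ‖a‖^2 := by positivity
    linarith
  have hcc : c * star c ≤ algebraMap ℝ B δ := by
    rw [hexp]
    have hb1 : (2*t) • algebraMap ℝ B ε ≤ (2*t) • s := rsmul_mono (by positivity) h
    have hb2 : (t^2) • (star a * a) ≤ (t^2) • algebraMap ℝ B (‖a‖^2) :=
      rsmul_mono (by positivity) CStarAlgebra.star_mul_le_algebraMap_norm_sq
    have hstep : (1:B) - (2*t) • s + (t^2) • (star a * a)
        ≤ 1 - (2*t) • algebraMap ℝ B ε + (t^2) • algebraMap ℝ B (‖a‖^2) :=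
      add_le_add (sub_le_sub_left hb1 1) hb2
    refine hstep.trans (le_of_eq ?_)
    rw [Algebra.smul_def, ← map_mul, Algebra.smul_def, ← map_mul, hδ]
    rw [map_add, map_sub, map_one]
  have hnc : ‖c‖^2 ≤ δ := by
    have h0 : (0:B) ≤ c * star c := mul_star_self_nonneg c
    have h1 : ‖c * star c‖ ≤ δ :=
      (CStarAlgebra.norm_le_iff_le_algebraMap (c * star c) hδ0 h0).2 hcc
    calc ‖c‖^2 = ‖c * star c‖ := by rw [CStarRing.norm_self_mul_star, sq]
      _ ≤ δ := h1
  have hclt : ‖c‖ < 1 := by nlinarith [norm_nonneg c]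
  have hu1 : IsUnit ((1:B) - c) := isUnit_one_sub_of_norm_lt_one hclt
  have h1c : (1:B) - c = α • star a := by rw [hc, sub_sub_cancel]
  have hua' : IsUnit (α • star a) := h1c ▸ hu1
  have husa : IsUnit (star a) := by
    obtain ⟨u, hu⟩ := hua'
    have hmul : star a * (α • (↑u⁻¹ : B)) = 1 := by
      calc star a * (α • (↑u⁻¹ : B)) = α • (star a * ↑u⁻¹) := mul_smul_comm _ _ _
        _ = (α • star a) * ↑u⁻¹ := (smul_mul_assoc _ _ _).symm
        _ = (u : B) * ↑u⁻¹ := by rw [hu]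
        _ = 1 := u.mul_inv
    have hmul' : (α • (↑u⁻¹ : B)) * star a = 1 := by
      calc (α • (↑u⁻¹ : B)) * star a = α • (↑u⁻¹ * star a) := smul_mul_assoc _ _ _
        _ = ↑u⁻¹ * (α • star a) := (mul_smul_comm _ _ _).symm
        _ = ↑u⁻¹ * (u : B) := by rw [hu]
        _ = 1 := u.inv_mul
    exact isUnit_iff_exists.2 ⟨_, hmul, hmul'⟩
  have hua : IsUnit a := isUnit_star.mp husa
  refine ⟨hua, ?_⟩
  set b : B := Ring.inverse a with hbdef
  have hab : a * b = 1 := Ring.mul_inverse_cancel a hua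
  have hba : b * a = 1 := Ring.inverse_mul_cancel a hua
  have hkey : star b * s * b = (2 * Complex.I)⁻¹ • (star b - b) := by
    rw [hs, mul_smul_comm, smul_mul_assoc]
    congr 1
    rw [mul_sub, sub_mul, mul_assoc, hab, mul_one, ← star_mul, hab, star_one, one_mul]
  have hconj : ε • (star b * b) ≤ star b * s * b := by
    have h1 := star_left_conjugate_le_conjugate h b
    have e : star b * algebraMap ℝ B ε * b = ε • (star b * b) := by
      calc star b * algebraMap ℝ B ε * b = algebraMap ℝ B ε * star b * b := by
            rw [← Algebra.commutes]
        _ = algebraMap ℝ B ε * (star b * b) := mul_assoc _ _ _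
        _ = ε • (star b * b) := (Algebra.smul_def _ _).symm
    rw [e] at h1
    exact h1
  have hnn : (0:B) ≤ ε • (star b * b) := rsmul_nonneg hεnn (star_mul_self_nonneg b)
  have hnorm1 : ‖ε • (star b * b)‖ ≤ ‖star b * s * b‖ :=
    CStarAlgebra.norm_le_norm_of_nonneg_of_le hnn hconj
  have hL : ‖ε • (star b * b)‖ = ε * ‖b‖^2 := by
    rw [norm_smul, Real.norm_of_nonneg hεnn, CStarRing.norm_star_mul_self, sq]
  have hR : ‖star b * s * b‖ ≤ ‖b‖ := by
    rw [hkey, norm_smul, hnorm2I]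
    have h1 : ‖star b - b‖ ≤ 2 * ‖b‖ := by
      calc ‖star b - b‖ ≤ ‖star b‖ + ‖b‖ := norm_sub_le _ _
        _ = 2 * ‖b‖ := by rw [norm_star]; ring
    linarith
  have hfin : ε * ‖b‖^2 ≤ ‖b‖ := by rw [← hL]; exact hnorm1.trans hR
  rcases eq_or_lt_of_le (norm_nonneg b) with h0 | h0
  · rw [← h0]
    positivity
  · rw [inv_eq_one_div, le_div_iff₀ hε]
    nlinarith

end Aux

/-- Let `x` be self-adjoint in a unital C*-algebra, `λ ∈ M_m(ℂ)` with
`Im λ = (λ - λ*)/(2i)` positive definite. Realizing `M_m(ℂ) ⊗ C*(x,1)` via a unital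
*-homomorphism `φ : M_m(ℂ) → B` whose range commutes with `x`, the element
`λ ⊗ 1 - 1 ⊗ x = φ(λ) - x` is invertible and `‖(φ(λ) - x)⁻¹‖ ≤ ‖(Im λ)⁻¹‖`. -/
theorem resolvent_bound_posdef_imaginary_part {B : Type*} [CStarAlgebra B] [StarModule ℂ B]
    (m : ℕ) (φ : Matrix (Fin m) (Fin m) ℂ →⋆ₐ[ℂ] B)
    (x : B) (hx : IsSelfAdjoint x) (hcomm : ∀ c : Matrix (Fin m) (Fin m) ℂ, φ c * x = x * φ c)
    (lam : Matrix (Fin m) (Fin m) ℂ)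
    (hpos : ((2 * Complex.I)⁻¹ • (lam - lam.conjTranspose)).PosDef) :
    IsUnit (φ lam - x) ∧
      ‖Ring.inverse (φ lam - x)‖ ≤ ‖((2 * Complex.I)⁻¹ • (lam - lam.conjTranspose))⁻¹‖ := by
  classical
  rcases eq_or_ne m 0 with hm | hm
  · subst hm
    have h10 : (0:B) = 1 := by
      have h1 := map_one φ
      rw [Subsingleton.elim (1 : Matrix (Fin 0) (Fin 0) ℂ) 0, map_zero] at h1
      exact h1
    haveI : Subsingleton B := subsingleton_of_zero_eq_one h10
    refine ⟨isUnit_of_subsingleton _, ?_⟩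
    rw [Subsingleton.elim (Ring.inverse (φ lam - x)) 0, norm_zero]
    exact norm_nonneg _
  haveI : NeZero m := ⟨hm⟩
  letI : PartialOrder B := CStarAlgebra.spectralOrder B
  letI : StarOrderedRing B := CStarAlgebra.spectralOrderedRing B
  set k : Matrix (Fin m) (Fin m) ℂ := (2 * Complex.I)⁻¹ • (lam - lam.conjTranspose) with hk_def
  have hk : k.IsHermitian := hpos.1
  -- the minimal eigenvalue
  obtain ⟨i₀, -, hmin⟩ := Finset.exists_min_image Finset.univ hk.eigenvalues Finset.univ_nonempty
  set μ : ℝ := hk.eigenvalues i₀ with hμdef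
  have hμ : 0 < μ := hpos.eigenvalues_pos i₀
  -- (A) `φ k` dominates `μ`
  have hPSD : (k - (μ:ℂ) • 1).PosSemidef := by
    have hspec := hk.spectral_theorem
    set U : Matrix (Fin m) (Fin m) ℂ := (hk.eigenvectorUnitary : Matrix (Fin m) (Fin m) ℂ)
      with hU_def
    have hU : U * star U = 1 := (Matrix.mem_unitaryGroup_iff).mp hk.eigenvectorUnitary.2
    have h1 : (μ:ℂ) • (1 : Matrix (Fin m) (Fin m) ℂ) = U * ((μ:ℂ) • 1) * star U := by
      rw [mul_smul_comm, mul_one, smul_mul_assoc, hU]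
    have h2 : k - (μ:ℂ) • 1 =
        U * (Matrix.diagonal (RCLike.ofReal ∘ hk.eigenvalues) - (μ:ℂ) • 1) * star U := by
      rw [Matrix.mul_sub, Matrix.sub_mul, ← h1]
      exact congrArg (· - (μ:ℂ) • (1 : Matrix (Fin m) (Fin m) ℂ)) hspec
    rw [h2]
    have h3 : (Matrix.diagonal (RCLike.ofReal ∘ hk.eigenvalues)
        - (μ:ℂ) • (1 : Matrix (Fin m) (Fin m) ℂ)).PosSemidef := by
      rw [Matrix.smul_one_eq_diagonal, Matrix.diagonal_sub]
      refine Matrix.posSemidef_diagonal_iff.mpr fun i => ?_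
      rw [sub_nonneg]
      have h5 : μ ≤ hk.eigenvalues i := hmin i (Finset.mem_univ i)
      simp only [Function.comp_apply]
      exact (RCLike.ofReal_le_ofReal (K := ℂ)).mpr h5
    have h4 := h3.mul_mul_conjTranspose_same U
    rwa [← Matrix.star_eq_conjTranspose] at h4
  obtain ⟨c, hcdecomp⟩ : ∃ c : Matrix (Fin m) (Fin m) ℂ, k - (μ:ℂ) • 1 = c.conjTranspose * c := by
    open scoped MatrixOrder in exact CStarAlgebra.nonneg_iff_eq_star_mul_self.mp hPSD.nonneg
  have halg : algebraMap ℝ B μ = (μ:ℂ) • (1:B) := by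
    rw [Algebra.algebraMap_eq_smul_one, Complex.coe_smul]
  have hA : algebraMap ℝ B μ ≤ φ k := by
    have h1 : (0:B) ≤ star (φ c) * φ c := star_mul_self_nonneg _
    have h2 : φ k - (μ:ℂ) • (1:B) = star (φ c) * φ c := by
      have h3 : φ (k - (μ:ℂ) • 1) = φ (c.conjTranspose * c) := by rw [← hcdecomp]
      have h4 : φ ((μ:ℂ) • 1) = (μ:ℂ) • (1:B) := by rw [map_smul, map_one]
      rw [map_sub, h4, map_mul, ← Matrix.star_eq_conjTranspose, map_star] at h3
      exact h3
    rw [halg]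
    exact sub_nonneg.mp (h2 ▸ h1)
  -- (B) `μ⁻¹ ≤ ‖k⁻¹‖`
  have hdet : IsUnit k.det := isUnit_iff_ne_zero.2 hpos.det_pos.ne'
  have hkinv : k⁻¹ * k = 1 := Matrix.nonsing_inv_mul k hdet
  have hv1 : ‖hk.eigenvectorBasis i₀‖ = 1 := hk.eigenvectorBasis.orthonormal.1 i₀
  have hbound : μ⁻¹ ≤ ‖k⁻¹‖ := by
    set u : Fin m → ℂ := (WithLp.equiv 2 _) (hk.eigenvectorBasis i₀) with hu_def
    have hmv : k *ᵥ u = μ • u := hk.mulVec_eigenvectorBasis i₀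
    have hinvv : k⁻¹ *ᵥ u = μ⁻¹ • u := by
      have h1 : k⁻¹ *ᵥ (k *ᵥ u) = u := by
        rw [Matrix.mulVec_mulVec, hkinv, Matrix.one_mulVec]
      rw [hmv, Matrix.mulVec_smul] at h1
      calc k⁻¹ *ᵥ u = μ⁻¹ • (μ • (k⁻¹ *ᵥ u)) := by
            rw [smul_smul, inv_mul_cancel₀ hμ.ne', one_smul]
        _ = μ⁻¹ • u := by rw [h1]
    have h2 : ‖(EuclideanSpace.equiv (Fin m) ℂ).symm (k⁻¹ *ᵥ u)‖
        ≤ ‖k⁻¹‖ * ‖hk.eigenvectorBasis i₀‖ :=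
      Matrix.l2_opNorm_mulVec k⁻¹ (hk.eigenvectorBasis i₀)
    rw [hv1, mul_one] at h2
    have h3 : (EuclideanSpace.equiv (Fin m) ℂ).symm (k⁻¹ *ᵥ u)
        = μ⁻¹ • hk.eigenvectorBasis i₀ := by
      rw [hinvv]; rfl
    rw [h3, norm_smul, Real.norm_of_nonneg (by positivity), hv1, mul_one] at h2
    exact h2
  -- conclude via the abstract resolvent bound
  have hseq : (2 * Complex.I)⁻¹ • ((φ lam - x) - star (φ lam - x)) = φ k := by
    have hstar : star (φ lam - x) = φ lam.conjTranspose - x := by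
      rw [star_sub, hx.star_eq, ← map_star φ lam, Matrix.star_eq_conjTranspose]
    rw [hstar, hk_def, map_smul, map_sub]
    congr 1
    abel
  have hmain := key_resolvent (φ lam - x) μ hμ (by rw [hseq]; exact hA)
  exact ⟨hmain.1, hmain.2.trans hbound⟩
end
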